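/- Let K_{r,s} be a complete bipartite graph with vertex bipartition (A,B), and let Q ⊆ ℝ^V×ℝ^E×ℝ×ℝ^E be the set of tuples (x,y,λ₁,y¹) satisfying: x_v + Σ_{e∈δ(v)} y¹_e − λ₁ ≤ 0 for all v∈A; Σ_{e∈δ(w)} y¹_e − λ₁ ≤ 0 for all w∈B; x_w + Σ_{e∈δ(w)}(y_e − y¹_e) + λ₁ ≤ 1 for all w∈B; Σ_{e∈δ(v)}(y_e − y¹_e) + λ₁ ≤ 1 for all v∈A; y¹_e ≥ 0 and y_e − y¹_e ≥ 0 for all e∈E; x_v ≥ 0 for all v∈V; and 0 ≤ λ₁ ≤ 1. Then the projection of Q onto the (x,y)-coordinates equals the total matching polytope P_T(K_{r,s}). -/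
import Mathlib
set_option linter.unusedSectionVars false
set_option linter.unusedVariables false

open Finset

variable {V : Type*}

/-- Adjacency between elements (vertices and edges) of a graph. -/
def elemAdj (G : SimpleGraph V) : V ⊕ G.edgeSet → V ⊕ G.edgeSet → Prop
  | Sum.inl v, Sum.inl w => G.Adj v w
  | Sum.inl v, Sum.inr e => v ∈ (e : Sym2 V)
  | Sum.inr e, Sum.inl v => v ∈ (e : Sym2 V)
  | Sum.inr e, Sum.inr f => e ≠ f ∧ ∃ v, v ∈ (e : Sym2 V) ∧ v ∈ (f : Sym2 V)

/-- A total matching is a set of pairwise non-adjacent elements. -/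
def IsTotalMatching (G : SimpleGraph V) (T : Set (V ⊕ G.edgeSet)) : Prop :=
  ∀ d ∈ T, ∀ d' ∈ T, d ≠ d' → ¬ elemAdj G d d'

/-- Characteristic vector of a set of elements. -/
noncomputable def charVec (G : SimpleGraph V) (T : Set (V ⊕ G.edgeSet)) :
    V ⊕ G.edgeSet → ℝ :=
  T.indicator fun _ => 1

/-- The total matching polytope: convex hull of characteristic vectors of total matchings. -/
def totalMatchingPolytope (G : SimpleGraph V) : Set ((V ⊕ G.edgeSet) → ℝ) :=
  convexHull ℝ {z | ∃ T, IsTotalMatching G T ∧ z = charVec G T}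

/-- `G` is the complete bipartite graph with vertex bipartition `(A, B)`. -/
def IsCompleteBipartiteWith [Fintype V] [DecidableEq V]
    (G : SimpleGraph V) (A B : Finset V) : Prop :=
  Disjoint A B ∧ A ∪ B = Finset.univ ∧
    ∀ v w, G.Adj v w ↔ ((v ∈ A ∧ w ∈ B) ∨ (v ∈ B ∧ w ∈ A))

/- ############ auxiliary material ############ -/

lemma substoch {I J : Type*} [Fintype I] [Fintype J] [DecidableEq I] [DecidableEq J]
    (M : I → J → ℝ) (h0 : ∀ i j, 0 ≤ M i j)
    (hr : ∀ i, ∑ j, M i j ≤ 1) (hc : ∀ j, ∑ i, M i j ≤ 1) :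
    ∃ w : Equiv.Perm (I ⊕ J) → ℝ, (∀ σ, 0 ≤ w σ) ∧ ∑ σ, w σ = 1 ∧
      ∀ i j, M i j = ∑ σ, w σ * (if σ (Sum.inl i) = Sum.inr j then 1 else 0) := by
  classical
  let N : Matrix (I ⊕ J) (I ⊕ J) ℝ := fun p q =>
    Sum.elim
      (fun i => Sum.elim (fun i' => if i = i' then 1 - ∑ j, M i j else 0) (fun j => M i j) q)
      (fun j => Sum.elim (fun i => M i j) (fun j' => if j = j' then 1 - ∑ i, M i j else 0) q) p
  have hNmem : N ∈ doublyStochastic ℝ (I ⊕ J) := by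
    rw [mem_doublyStochastic_iff_sum]
    refine ⟨?_, ?_, ?_⟩
    · rintro (i | j) (i' | j') <;> simp only [N, Sum.elim_inl, Sum.elim_inr]
      · split
        · simpa using hr i
        · exact le_refl 0
      · exact h0 _ _
      · exact h0 _ _
      · split
        · simpa using hc j
        · exact le_refl 0
    · rintro (i | j) <;>
        simp [N, Fintype.sum_sum_type, Finset.sum_ite_eq]
    · rintro (i | j) <;>
        simp [N, Fintype.sum_sum_type, Finset.sum_ite_eq]
  obtain ⟨w, hw0, hw1, hwsum⟩ := exists_eq_sum_perm_of_mem_doublyStochastic hNmem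
  refine ⟨w, hw0, hw1, fun i j => ?_⟩
  have h := congrFun (congrFun hwsum (Sum.inl i)) (Sum.inr j)
  simp only [Matrix.sum_apply, Matrix.smul_apply, Equiv.Perm.permMatrix,
    PEquiv.toMatrix_apply, Equiv.toPEquiv_apply, Option.mem_def, Option.some.injEq,
    smul_eq_mul] at h
  rw [show M i j = N (Sum.inl i) (Sum.inr j) from rfl, ← h]

section Bipartite

variable [Fintype V] [DecidableEq V] (G : SimpleGraph V) [DecidableRel G.Adj]
  {A B : Finset V}

lemma bip_symm (hG : IsCompleteBipartiteWith G A B) : IsCompleteBipartiteWith G B A :=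
  ⟨hG.1.symm, by rw [Finset.union_comm]; exact hG.2.1,
    fun v w => by rw [hG.2.2]; tauto⟩

lemma bip_ne (hG : IsCompleteBipartiteWith G A B) {a b : V} (ha : a ∈ A) (hb : b ∈ B) :
    a ≠ b := fun h => Finset.disjoint_left.1 hG.1 ha (h ▸ hb)

lemma bip_adj (hG : IsCompleteBipartiteWith G A B) {a b : V} (ha : a ∈ A) (hb : b ∈ B) :
    G.Adj a b := (hG.2.2 a b).2 (Or.inl ⟨ha, hb⟩)

lemma edge_rep (hG : IsCompleteBipartiteWith G A B) (e : G.edgeSet) :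
    ∃ a b : V, ∃ (ha : a ∈ A) (hb : b ∈ B), (e : Sym2 V) = s(a, b) := by
  obtain ⟨e, he⟩ := e
  induction e with
  | _ u w =>
    rw [SimpleGraph.mem_edgeSet, hG.2.2] at he
    rcases he with ⟨hu, hw⟩ | ⟨hu, hw⟩
    · exact ⟨u, w, hu, hw, rfl⟩
    · exact ⟨w, u, hw, hu, Sym2.eq_swap⟩

/-- The edge between `a ∈ A` and `b ∈ B`. -/
def emk (hG : IsCompleteBipartiteWith G A B) (a : ↥A) (b : ↥B) : G.edgeSet :=
  ⟨s((a : V), (b : V)), (bip_adj G hG a.2 b.2)⟩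

lemma emk_inj (hG : IsCompleteBipartiteWith G A B) {a a' : ↥A} {b b' : ↥B}
    (h : emk G hG a b = emk G hG a' b') : a = a' ∧ b = b' := by
  have h2 := Subtype.ext_iff.1 h
  simp only [emk, Sym2.eq, Sym2.rel_iff', Prod.mk.injEq, Prod.swap_prod_mk] at h2
  rcases h2 with ⟨h1, h2⟩ | ⟨h1, h2⟩
  · exact ⟨Subtype.ext h1, Subtype.ext h2⟩
  · exact absurd h1 (bip_ne G hG a.2 b'.2)

lemma mem_emk (hG : IsCompleteBipartiteWith G A B) {v : V} {a : ↥A} {b : ↥B} :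
    v ∈ ((emk G hG a b : G.edgeSet) : Sym2 V) ↔ v = (a : V) ∨ v = (b : V) := by
  simp [emk]

lemma sum_delta_A (hG : IsCompleteBipartiteWith G A B) {a : V} (ha : a ∈ A)
    (y : G.edgeSet → ℝ) :
    ∑ e : G.edgeSet, (if a ∈ (e : Sym2 V) then y e else 0)
      = ∑ b : ↥B, y (emk G hG ⟨a, ha⟩ b) := by
  classical
  rw [← Finset.sum_filter]
  refine (Finset.sum_bij (fun b _ => emk G hG ⟨a, ha⟩ b) ?_ ?_ ?_ ?_).symm
  · intro b _
    simp [Finset.mem_filter, mem_emk]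
  · intro b _ b' _ h
    exact (emk_inj G hG h).2
  · intro e he
    simp only [Finset.mem_filter, Finset.mem_univ, true_and] at he
    obtain ⟨a', b', ha', hb', hrep⟩ := edge_rep G hG e
    have hav : a = a' := by
      rw [hrep, Sym2.mem_iff] at he
      rcases he with rfl | rfl
      · rfl
      · exact absurd rfl (bip_ne G hG ha hb')
    refine ⟨⟨b', hb'⟩, Finset.mem_univ _, Subtype.ext ?_⟩
    rw [hrep, ← hav]
    rfl
  · intro b _
    rfl

lemma sum_delta_B (hG : IsCompleteBipartiteWith G A B) {b : V} (hb : b ∈ B)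
    (y : G.edgeSet → ℝ) :
    ∑ e : G.edgeSet, (if b ∈ (e : Sym2 V) then y e else 0)
      = ∑ a : ↥A, y (emk G hG a ⟨b, hb⟩) := by
  classical
  rw [← Finset.sum_filter]
  refine (Finset.sum_bij (fun a _ => emk G hG a ⟨b, hb⟩) ?_ ?_ ?_ ?_).symm
  · intro a _
    simp [Finset.mem_filter, mem_emk]
  · intro a _ a' _ h
    exact (emk_inj G hG h).1
  · intro e he
    simp only [Finset.mem_filter, Finset.mem_univ, true_and] at he
    obtain ⟨a', b', ha', hb', hrep⟩ := edge_rep G hG e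
    have hbv : b = b' := by
      rw [hrep, Sym2.mem_iff] at he
      rcases he with rfl | rfl
      · exact absurd rfl (bip_ne G hG ha' hb)
      · rfl
    refine ⟨⟨a', ha'⟩, Finset.mem_univ _, Subtype.ext ?_⟩
    rw [hrep, ← hbv]
    rfl
  · intro a _
    rfl

end Bipartite
section Half

variable [Fintype V] [DecidableEq V] (G : SimpleGraph V) [DecidableRel G.Adj]
  {A B : Finset V}

lemma halfside_mem (hG : IsCompleteBipartiteWith G A B)
    (x : V → ℝ) (y : G.edgeSet → ℝ)
    (hx0 : ∀ v, v ∉ A → x v = 0) (hxnn : ∀ v, 0 ≤ x v) (hynn : ∀ e, 0 ≤ y e)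
    (hrow : ∀ v ∈ A, x v + ∑ e : G.edgeSet, (if v ∈ (e : Sym2 V) then y e else 0) ≤ 1)
    (hcol : ∀ w ∈ B, ∑ e : G.edgeSet, (if w ∈ (e : Sym2 V) then y e else 0) ≤ 1) :
    Sum.elim x y ∈ totalMatchingPolytope G := by
  classical
  set M : ↥A → (↥B ⊕ ↥A) → ℝ := fun a j =>
    Sum.elim (fun b => y (emk G hG a b)) (fun a' => if a = a' then x ↑a else 0) j with hMdef
  have hM0 : ∀ a j, 0 ≤ M a j := by
    rintro a (b | a') <;> simp only [M, Sum.elim_inl, Sum.elim_inr]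
    · exact hynn _
    · split
      · exact hxnn _
      · exact le_rfl
  have hMrow : ∀ a, ∑ j, M a j ≤ 1 := by
    intro a
    rw [Fintype.sum_sum_type]
    have h1 : ∑ a' : ↥A, M a (Sum.inr a') = x ↑a := by
      simp [M, Finset.sum_ite_eq']
    have h2 : ∑ b : ↥B, M a (Sum.inl b)
        = ∑ e : G.edgeSet, (if ↑a ∈ (e : Sym2 V) then y e else 0) :=
      (sum_delta_A G hG a.2 y).symm
    rw [h1, h2]
    have := hrow ↑a a.2
    linarith
  have hMcol : ∀ j, ∑ a, M a j ≤ 1 := by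
    rintro (b | a')
    · have h2 : ∑ a : ↥A, M a (Sum.inl b)
          = ∑ e : G.edgeSet, (if ↑b ∈ (e : Sym2 V) then y e else 0) :=
        (sum_delta_B G hG b.2 y).symm
      rw [h2]
      exact hcol ↑b b.2
    · have h1 : ∑ a : ↥A, M a (Sum.inr a') = x ↑a' := by
        simp [M]
      rw [h1]
      have h3 := hrow ↑a' a'.2
      have h4 : (0:ℝ) ≤ ∑ e : G.edgeSet, (if ↑a' ∈ (e : Sym2 V) then y e else 0) :=
        Finset.sum_nonneg fun e _ => by by_cases h : (↑a' ∈ (e : Sym2 V)) <;> simp [h, hynn e]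
      linarith
  obtain ⟨w, hw0, hw1, hM⟩ := substoch M hM0 hMrow hMcol
  set T : Equiv.Perm (↥A ⊕ (↥B ⊕ ↥A)) → Set (V ⊕ G.edgeSet) := fun σ =>
    Sum.elim (fun v => ∃ h : v ∈ A, σ (Sum.inl ⟨v, h⟩) = Sum.inr (Sum.inr ⟨v, h⟩))
      (fun e => ∃ a b, e = emk G hG a b ∧ σ (Sum.inl a) = Sum.inr (Sum.inl b)) with hTdef
  have hmemv : ∀ σ v, (Sum.inl v ∈ T σ) ↔
      ∃ h : v ∈ A, σ (Sum.inl ⟨v, h⟩) = Sum.inr (Sum.inr ⟨v, h⟩) := fun _ _ => Iff.rfl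
  have hmeme : ∀ σ e, (Sum.inr e ∈ T σ) ↔
      ∃ a b, e = emk G hG a b ∧ σ (Sum.inl a) = Sum.inr (Sum.inl b) := fun _ _ => Iff.rfl
  have hTM : ∀ σ, IsTotalMatching G (T σ) := by
    intro σ d hd d' hd' hne hadj
    cases d with
    | inl v =>
      obtain ⟨hv, hσv⟩ := (hmemv σ v).1 hd
      cases d' with
      | inl v' =>
        obtain ⟨hv', _⟩ := (hmemv σ v').1 hd'
        have : G.Adj v v' := hadj
        rw [hG.2.2] at this
        rcases this with ⟨_, h⟩ | ⟨h, _⟩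
        · exact bip_ne G hG hv' h rfl
        · exact bip_ne G hG hv h rfl
      | inr e =>
        obtain ⟨a, b, rfl, hσe⟩ := (hmeme σ e).1 hd'
        have hve : v ∈ ((emk G hG a b : G.edgeSet) : Sym2 V) := hadj
        rcases (mem_emk G hG).1 hve with hva | hvb
        · have : (⟨v, hv⟩ : ↥A) = a := Subtype.ext hva
          rw [this] at hσv
          rw [hσv] at hσe
          exact absurd (Sum.inr.inj hσe) (by simp)
        · exact bip_ne G hG hv b.2 hvb
    | inr e =>
      obtain ⟨a, b, rfl, hσe⟩ := (hmeme σ e).1 hd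
      cases d' with
      | inl v =>
        obtain ⟨hv, hσv⟩ := (hmemv σ v).1 hd'
        rcases (mem_emk G hG).1 (hadj : v ∈ _) with hva | hvb
        · have : (⟨v, hv⟩ : ↥A) = a := Subtype.ext hva
          rw [this] at hσv
          rw [hσv] at hσe
          exact absurd (Sum.inr.inj hσe) (by simp)
        · exact bip_ne G hG hv b.2 hvb
      | inr f =>
        obtain ⟨a', b', rfl, hσf⟩ := (hmeme σ f).1 hd'
        obtain ⟨hef, u, hu1, hu2⟩ := (hadj : _ ∧ _)
        rcases (mem_emk G hG).1 hu1 with h1 | h1 <;>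
          rcases (mem_emk G hG).1 hu2 with h2 | h2
        · have haa : a = a' := Subtype.ext (h1 ▸ h2 ▸ rfl)
          rw [haa, hσf] at hσe
          have hbb : b' = b := Sum.inl.inj (Sum.inr.inj hσe)
          exact hne (by rw [haa, hbb])
        · exact bip_ne G hG a.2 b'.2 (h1 ▸ h2 ▸ rfl)
        · exact bip_ne G hG a'.2 b.2 (h2 ▸ h1 ▸ rfl)
        · have hbb : b = b' := Subtype.ext (h1 ▸ h2 ▸ rfl)
          rw [hbb, ← hσf] at hσe
          have haa : a = a' := Sum.inl.inj (σ.injective hσe)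
          exact hne (by rw [haa, hbb])
  have key : ∑ σ, w σ • charVec G (T σ) = Sum.elim x y := by
    funext d
    rw [Finset.sum_apply]
    cases d with
    | inl v =>
      by_cases hv : v ∈ A
      · have h2 : Sum.elim x y (Sum.inl v) = M ⟨v, hv⟩ (Sum.inr ⟨v, hv⟩) := by
          simp [M]
        rw [h2, hM]
        refine Finset.sum_congr rfl fun σ _ => ?_
        simp only [Pi.smul_apply, smul_eq_mul]
        congr 1
        rw [charVec, Set.indicator_apply]
        refine (if_congr ?_ rfl rfl).symm
        rw [hmemv]
        exact ⟨fun h => ⟨hv, h⟩, fun ⟨h, hh⟩ => hh⟩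
      · have h2 : Sum.elim x y (Sum.inl v) = 0 := hx0 v hv
        rw [h2]
        refine Finset.sum_eq_zero fun σ _ => ?_
        have hnm : Sum.inl v ∉ T σ := fun hmem => hv ((hmemv σ v).1 hmem).choose
        simp [charVec, Set.indicator_apply, hnm]
    | inr e =>
      obtain ⟨a, b, ha, hb, hrep⟩ := edge_rep G hG e
      have he : e = emk G hG ⟨a, ha⟩ ⟨b, hb⟩ := Subtype.ext hrep
      subst he
      have h2 : Sum.elim x y (Sum.inr (emk G hG ⟨a, ha⟩ ⟨b, hb⟩))
          = M ⟨a, ha⟩ (Sum.inl ⟨b, hb⟩) := by simp [M]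
      rw [h2, hM]
      refine Finset.sum_congr rfl fun σ _ => ?_
      simp only [Pi.smul_apply, smul_eq_mul]
      congr 1
      rw [charVec, Set.indicator_apply]
      refine (if_congr ?_ rfl rfl).symm
      rw [hmeme]
      constructor
      · exact fun h => ⟨⟨a, ha⟩, ⟨b, hb⟩, rfl, h⟩
      · rintro ⟨a', b', heq, hσ⟩
        obtain ⟨h1', h2'⟩ := emk_inj G hG heq
        rwa [← h1', ← h2'] at hσ
  rw [totalMatchingPolytope]
  exact mem_convexHull_of_exists_fintype w (fun σ => charVec G (T σ)) hw0 hw1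
    (fun σ => ⟨T σ, hTM σ, rfl⟩) key

end Half
section Helpers

variable [Fintype V] [DecidableEq V] (G : SimpleGraph V) [DecidableRel G.Adj]

open scoped Classical

lemma charVec_nonneg (T : Set (V ⊕ G.edgeSet)) (d : V ⊕ G.edgeSet) :
    0 ≤ charVec G T d := by
  rw [charVec, Set.indicator_apply]
  split <;> norm_num

lemma charVec_eq_ite (T : Set (V ⊕ G.edgeSet)) (d : V ⊕ G.edgeSet) [Decidable (d ∈ T)] :
    charVec G T d = if d ∈ T then 1 else 0 := by
  rw [charVec, Set.indicator_apply]

lemma edges_at_le {T : Set (V ⊕ G.edgeSet)} (hT : IsTotalMatching G T) (v : V) :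
    ∑ e : G.edgeSet, (if v ∈ (e : Sym2 V) then charVec G T (Sum.inr e) else 0) ≤ 1 := by
  classical
  have hsum : ∑ e : G.edgeSet, (if v ∈ (e : Sym2 V) then charVec G T (Sum.inr e) else 0)
      = ∑ e : G.edgeSet, (if (v ∈ (e : Sym2 V) ∧ Sum.inr e ∈ T) then (1:ℝ) else 0) := by
    refine Finset.sum_congr rfl fun e _ => ?_
    rw [charVec_eq_ite]
    by_cases h1 : v ∈ (e : Sym2 V) <;> by_cases h2 : Sum.inr e ∈ T <;> simp [h1, h2]
  rw [hsum, Finset.sum_boole]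
  have hcard : #({e : G.edgeSet | v ∈ (e : Sym2 V) ∧ Sum.inr e ∈ T} : Finset _) ≤ 1 := by
    rw [Finset.card_le_one]
    intro e he f hf
    simp only [Finset.mem_filter] at he hf
    by_contra hne
    exact hT _ he.2.2 _ hf.2.2 (fun h => hne (Sum.inr.inj h))
      ⟨hne, v, he.2.1, hf.2.1⟩
  exact_mod_cast hcard

lemma vert_edges_le {T : Set (V ⊕ G.edgeSet)} (hT : IsTotalMatching G T) (v : V) :
    charVec G T (Sum.inl v) +
      ∑ e : G.edgeSet, (if v ∈ (e : Sym2 V) then charVec G T (Sum.inr e) else 0) ≤ 1 := by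
  classical
  by_cases hv : Sum.inl v ∈ T
  · have hz : ∀ e : G.edgeSet, (if v ∈ (e : Sym2 V) then charVec G T (Sum.inr e) else 0) = 0 := by
      intro e
      split_ifs with h1
      · rw [charVec_eq_ite]
        split_ifs with h2
        · exact absurd (hT _ hv _ h2 (by simp)) (fun hno => hno h1)
        · rfl
      · rfl
    rw [Finset.sum_eq_zero fun e _ => hz e, charVec_eq_ite, if_pos hv]
    norm_num
  · rw [charVec_eq_ite, if_neg hv, zero_add]
    exact edges_at_le G hT v

end Helpers
/-- Balas' extended formulation `Q` (in variables `(x, y, λ₁, y¹)`)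
projects onto the total matching polytope of the complete bipartite graph `K_{r,s}`. -/
theorem extended_formulation_projects_to_totalMatchingPolytope
    [Fintype V] [DecidableEq V] (G : SimpleGraph V) [DecidableRel G.Adj]
    (A B : Finset V) (hG : IsCompleteBipartiteWith G A B)
    (Q : Set ((V → ℝ) × (G.edgeSet → ℝ) × ℝ × (G.edgeSet → ℝ)))
    (hQ : Q = {p |
      (∀ v ∈ A, p.1 v +
          (∑ e : G.edgeSet, if v ∈ (e : Sym2 V) then p.2.2.2 e else 0) - p.2.2.1 ≤ 0) ∧
      (∀ w ∈ B,
          (∑ e : G.edgeSet, if w ∈ (e : Sym2 V) then p.2.2.2 e else 0) - p.2.2.1 ≤ 0) ∧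
      (∀ w ∈ B, p.1 w +
          (∑ e : G.edgeSet, if w ∈ (e : Sym2 V) then p.2.1 e - p.2.2.2 e else 0) +
          p.2.2.1 ≤ 1) ∧
      (∀ v ∈ A,
          (∑ e : G.edgeSet, if v ∈ (e : Sym2 V) then p.2.1 e - p.2.2.2 e else 0) +
          p.2.2.1 ≤ 1) ∧
      (∀ e : G.edgeSet, 0 ≤ p.2.2.2 e) ∧
      (∀ e : G.edgeSet, p.2.2.2 e ≤ p.2.1 e) ∧
      (∀ v : V, 0 ≤ p.1 v) ∧
      0 ≤ p.2.2.1 ∧ p.2.2.1 ≤ 1}) :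
    {z : (V ⊕ G.edgeSet) → ℝ | ∃ p ∈ Q,
        (∀ v : V, z (Sum.inl v) = p.1 v) ∧ ∀ e : G.edgeSet, z (Sum.inr e) = p.2.1 e} =
      totalMatchingPolytope G := by
  classical
  subst hQ
  apply Set.Subset.antisymm
  · -- projection ⊆ polytope
    rintro z ⟨p, hp, hzv, hze⟩
    simp only [Set.mem_setOf_eq] at hp
    obtain ⟨c1, c2, c3, c4, c5, c6, c7, c8, c9⟩ := hp
    have hz : z = Sum.elim p.1 p.2.1 := by
      funext d
      cases d with
      | inl v => exact hzv v
      | inr e => exact hze e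
    set L : ℝ := p.2.2.1 with hL
    set x1 : V → ℝ := fun v => if v ∈ A then L⁻¹ * p.1 v else 0 with hx1
    set y1 : G.edgeSet → ℝ := fun e => L⁻¹ * p.2.2.2 e with hy1
    set x0 : V → ℝ := fun v => if v ∈ B then (1 - L)⁻¹ * p.1 v else 0 with hx0
    set y0 : G.edgeSet → ℝ := fun e => (1 - L)⁻¹ * (p.2.1 e - p.2.2.2 e) with hy0
    have sum_scale : ∀ (c : ℝ) (f : G.edgeSet → ℝ) (v : V),
        (∑ e : G.edgeSet, if v ∈ (e : Sym2 V) then c * f e else 0)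
          = c * ∑ e : G.edgeSet, (if v ∈ (e : Sym2 V) then f e else 0) := by
      intro c f v
      rw [Finset.mul_sum]
      exact Finset.sum_congr rfl fun e _ => by
        by_cases h : v ∈ (e : Sym2 V) <;> simp [h]
    have hsub_nn : ∀ (f : G.edgeSet → ℝ), (∀ e, 0 ≤ f e) → ∀ v : V,
        (0:ℝ) ≤ ∑ e : G.edgeSet, (if v ∈ (e : Sym2 V) then f e else 0) := by
      intro f hf v
      exact Finset.sum_nonneg fun e _ => by
        by_cases h : v ∈ (e : Sym2 V) <;> simp [h, hf e]
    have hy1nn : ∀ e, 0 ≤ p.2.2.2 e := c5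
    have hydnn : ∀ e, 0 ≤ p.2.1 e - p.2.2.2 e := fun e => by linarith [c6 e]
    have hmem1 : Sum.elim x1 y1 ∈ totalMatchingPolytope G := by
      refine halfside_mem G hG x1 y1 (fun v hv => if_neg hv) ?_ ?_ ?_ ?_
      · intro v
        by_cases h : v ∈ A <;>
          simp [x1, h, mul_nonneg (inv_nonneg.2 c8) (c7 v)]
      · intro e
        exact mul_nonneg (inv_nonneg.2 c8) (c5 e)
      · intro v hv
        rw [hy1, sum_scale, hx1]
        simp only [if_pos hv]
        rw [← mul_add]
        by_cases hL0 : L = 0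
        · simp [hL0]
        · have h1 := c1 v hv
          calc L⁻¹ * (p.1 v + ∑ e : G.edgeSet, (if v ∈ (e : Sym2 V) then p.2.2.2 e else 0))
              ≤ L⁻¹ * L := mul_le_mul_of_nonneg_left (by linarith) (inv_nonneg.2 c8)
            _ = 1 := inv_mul_cancel₀ hL0
      · intro w hw
        rw [hy1, sum_scale]
        by_cases hL0 : L = 0
        · simp [hL0]
        · have h1 := c2 w hw
          calc L⁻¹ * (∑ e : G.edgeSet, (if w ∈ (e : Sym2 V) then p.2.2.2 e else 0))
              ≤ L⁻¹ * L := mul_le_mul_of_nonneg_left (by linarith) (inv_nonneg.2 c8)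
            _ = 1 := inv_mul_cancel₀ hL0
    have hmem0 : Sum.elim x0 y0 ∈ totalMatchingPolytope G := by
      have h1Lnn : (0:ℝ) ≤ 1 - L := by linarith
      refine halfside_mem G (bip_symm G hG) x0 y0 (fun v hv => if_neg hv) ?_ ?_ ?_ ?_
      · intro v
        by_cases h : v ∈ B <;>
          simp [x0, h, mul_nonneg (inv_nonneg.2 h1Lnn) (c7 v)]
      · intro e
        exact mul_nonneg (inv_nonneg.2 h1Lnn) (hydnn e)
      · intro w hw
        rw [hy0, sum_scale, hx0]
        simp only [if_pos hw]
        rw [← mul_add]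
        by_cases hL0 : (1 - L) = 0
        · simp [hL0]
        · have h1 := c3 w hw
          calc (1-L)⁻¹ * (p.1 w + ∑ e : G.edgeSet,
                (if w ∈ (e : Sym2 V) then p.2.1 e - p.2.2.2 e else 0))
              ≤ (1-L)⁻¹ * (1-L) := mul_le_mul_of_nonneg_left (by linarith) (inv_nonneg.2 h1Lnn)
            _ = 1 := inv_mul_cancel₀ hL0
      · intro v hv
        rw [hy0, sum_scale]
        by_cases hL0 : (1 - L) = 0
        · simp [hL0]
        · have h1 := c4 v hv
          calc (1-L)⁻¹ * (∑ e : G.edgeSet,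
                (if v ∈ (e : Sym2 V) then p.2.1 e - p.2.2.2 e else 0))
              ≤ (1-L)⁻¹ * (1-L) := mul_le_mul_of_nonneg_left (by linarith) (inv_nonneg.2 h1Lnn)
            _ = 1 := inv_mul_cancel₀ hL0
    have hzeq : z = L • Sum.elim x1 y1 + (1 - L) • Sum.elim x0 y0 := by
      rw [hz]
      funext d
      cases d with
      | inl v =>
        have hAB : v ∈ A ∨ v ∈ B := by
          have : v ∈ A ∪ B := hG.2.1 ▸ Finset.mem_univ v
          exact Finset.mem_union.1 this
        simp only [Pi.add_apply, Pi.smul_apply, Sum.elim_inl, smul_eq_mul]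
        rcases hAB with hv | hv
        · have hvB : v ∉ B := fun h => Finset.disjoint_left.1 hG.1 hv h
          rw [hx1, hx0]
          simp only [if_pos hv, if_neg hvB, mul_zero, add_zero]
          by_cases hL0 : L = 0
          · have hxv0 : p.1 v = 0 := by
              have h1 := c1 v hv
              have h2 := hsub_nn _ hy1nn v
              have h3 := c7 v
              linarith
            simp [hL0, hxv0]
          · rw [← mul_assoc, mul_inv_cancel₀ hL0, one_mul]
        · have hvA : v ∉ A := fun h => Finset.disjoint_left.1 hG.1 h hv
          rw [hx1, hx0]
          simp only [if_pos hv, if_neg hvA, mul_zero, zero_add]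
          by_cases hL0 : (1 - L) = 0
          · have hxv0 : p.1 v = 0 := by
              have h1 := c3 v hv
              have h2 := hsub_nn _ hydnn v
              have h3 := c7 v
              have hL1 : L = 1 := by linarith
              linarith
            simp [hL0, hxv0]
          · rw [← mul_assoc, mul_inv_cancel₀ hL0, one_mul]
      | inr e =>
        simp only [Pi.add_apply, Pi.smul_apply, Sum.elim_inr, smul_eq_mul]
        obtain ⟨a, b, ha, hb, hrep⟩ := edge_rep G hG e
        have hae : a ∈ (e : Sym2 V) := by rw [hrep]; exact Sym2.mem_mk_left a b
        rw [hy1, hy0]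
        by_cases hL0 : L = 0
        · have hy1e : p.2.2.2 e = 0 := by
            have h1 := c1 a ha
            have hle : p.2.2.2 e ≤
                ∑ e' : G.edgeSet, (if a ∈ (e' : Sym2 V) then p.2.2.2 e' else 0) := by
              have := Finset.single_le_sum
                (f := fun e' : G.edgeSet => if a ∈ (e' : Sym2 V) then p.2.2.2 e' else 0)
                (fun e' _ => by by_cases h : a ∈ (e' : Sym2 V) <;> simp [h, c5 e'])
                (Finset.mem_univ e)
              simpa [hae] using this
            have h3 := c7 a
            have := c5 e
            linarith
          simp [hL0, hy1e]
        by_cases hL1 : (1 - L) = 0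
        · have hyde : p.2.1 e - p.2.2.2 e = 0 := by
            have h1 := c4 a ha
            have hle : p.2.1 e - p.2.2.2 e ≤
                ∑ e' : G.edgeSet, (if a ∈ (e' : Sym2 V) then p.2.1 e' - p.2.2.2 e' else 0) := by
              have := Finset.single_le_sum
                (f := fun e' : G.edgeSet => if a ∈ (e' : Sym2 V) then p.2.1 e' - p.2.2.2 e' else 0)
                (fun e' _ => by by_cases h : a ∈ (e' : Sym2 V) <;> simp [h, hydnn e'])
                (Finset.mem_univ e)
              simpa [hae] using this
            have := hydnn e
            have hsnn := hsub_nn _ hydnn a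
            linarith
          have hLone : L = 1 := by linarith
          have heq : p.2.1 e = p.2.2.2 e := by linarith
          simp [hLone, ← heq]
        · rw [← mul_assoc, ← mul_assoc, mul_inv_cancel₀ hL0, mul_inv_cancel₀ hL1]
          ring
    rw [hzeq]
    have hcx : Convex ℝ (totalMatchingPolytope G) := convex_convexHull ℝ _
    exact hcx hmem1 hmem0 c8 (by linarith) (by ring)
  · -- polytope ⊆ projection
    refine convexHull_min ?_ ?_
    · -- generators
      rintro z ⟨T, hT, rfl⟩
      by_cases hB : ∀ w ∈ B, Sum.inl w ∉ T
      · refine ⟨(fun v => charVec G T (Sum.inl v), fun e => charVec G T (Sum.inr e), 1,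
          fun e => charVec G T (Sum.inr e)), ?_, fun v => rfl, fun e => rfl⟩
        simp only [Set.mem_setOf_eq]
        refine ⟨?_, ?_, ?_, ?_, ?_, ?_, ?_, ?_, ?_⟩
        · intro v hv
          have := vert_edges_le G hT v
          linarith
        · intro w hw
          have := edges_at_le G hT w
          linarith
        · intro w hw
          have h0 : charVec G T (Sum.inl w) = 0 := by
            rw [charVec_eq_ite, if_neg (hB w hw)]
          have hs : (∑ e : G.edgeSet, if w ∈ (e : Sym2 V) then
              charVec G T (Sum.inr e) - charVec G T (Sum.inr e) else 0) = 0 :=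
            Finset.sum_eq_zero fun e _ => by
              by_cases h : w ∈ (e : Sym2 V) <;> simp [h]
          rw [h0, hs]
          norm_num
        · intro v hv
          have hs : (∑ e : G.edgeSet, if v ∈ (e : Sym2 V) then
              charVec G T (Sum.inr e) - charVec G T (Sum.inr e) else 0) = 0 :=
            Finset.sum_eq_zero fun e _ => by
              by_cases h : v ∈ (e : Sym2 V) <;> simp [h]
          rw [hs]
          norm_num
        · exact fun e => charVec_nonneg G T _
        · exact fun e => le_rfl
        · exact fun v => charVec_nonneg G T _
        · norm_num
        · norm_num
      · push_neg at hB
        obtain ⟨w0, hw0B, hw0T⟩ := hB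
        have hA : ∀ v ∈ A, Sum.inl v ∉ T := by
          intro v hv hvT
          have hne : v ≠ w0 := fun h => Finset.disjoint_left.1 hG.1 hv (h ▸ hw0B)
          exact hT _ hvT _ hw0T (fun h => hne (Sum.inl.inj h))
            ((hG.2.2 v w0).2 (Or.inl ⟨hv, hw0B⟩))
        refine ⟨(fun v => charVec G T (Sum.inl v), fun e => charVec G T (Sum.inr e), 0,
          fun _ => 0), ?_, fun v => rfl, fun e => rfl⟩
        simp only [Set.mem_setOf_eq]
        refine ⟨?_, ?_, ?_, ?_, ?_, ?_, ?_, ?_, ?_⟩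
        · intro v hv
          have h0 : charVec G T (Sum.inl v) = 0 := by
            rw [charVec_eq_ite, if_neg (hA v hv)]
          simp [h0]
        · intro w hw
          simp
        · intro w hw
          have := vert_edges_le G hT w
          simp only [sub_zero, add_zero]
          linarith
        · intro v hv
          have := edges_at_le G hT v
          simp only [sub_zero, add_zero]
          linarith
        · exact fun e => le_rfl
        · exact fun e => charVec_nonneg G T _
        · exact fun v => charVec_nonneg G T _
        · norm_num
        · norm_num
    · -- convexity of the projection
      rintro z ⟨p, hp, hpv, hpe⟩ z' ⟨q, hq, hqv, hqe⟩ a b ha hb hab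
      simp only [Set.mem_setOf_eq] at hp hq
      obtain ⟨p1, p2, p3, p4, p5, p6, p7, p8, p9⟩ := hp
      obtain ⟨q1, q2, q3, q4, q5, q6, q7, q8, q9⟩ := hq
      have comb_sum : ∀ (c : V) (f g : G.edgeSet → ℝ),
          (∑ e : G.edgeSet, if c ∈ (e : Sym2 V) then a * f e + b * g e else 0)
            = a * (∑ e : G.edgeSet, if c ∈ (e : Sym2 V) then f e else 0)
              + b * (∑ e : G.edgeSet, if c ∈ (e : Sym2 V) then g e else 0) := by
        intro c f g
        rw [Finset.mul_sum, Finset.mul_sum, ← Finset.sum_add_distrib]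
        exact Finset.sum_congr rfl fun e _ => by
          by_cases h : c ∈ (e : Sym2 V) <;> simp [h]
      refine ⟨a • p + b • q, ?_, ?_, ?_⟩
      · simp only [Set.mem_setOf_eq, Prod.fst_add, Prod.snd_add, Prod.smul_fst, Prod.smul_snd,
          Pi.add_apply, Pi.smul_apply, smul_eq_mul]
        refine ⟨?_, ?_, ?_, ?_, ?_, ?_, ?_, ?_, ?_⟩
        · intro v hv
          rw [comb_sum]
          have h1 := p1 v hv
          have h2 := q1 v hv
          nlinarith
        · intro w hw
          rw [comb_sum]
          have h1 := p2 w hw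
          have h2 := q2 w hw
          nlinarith
        · intro w hw
          have hs : (∑ e : G.edgeSet, if w ∈ (e : Sym2 V) then
                (a * p.2.1 e + b * q.2.1 e) - (a * p.2.2.2 e + b * q.2.2.2 e) else 0)
              = a * (∑ e : G.edgeSet, if w ∈ (e : Sym2 V) then p.2.1 e - p.2.2.2 e else 0)
                + b * (∑ e : G.edgeSet, if w ∈ (e : Sym2 V) then q.2.1 e - q.2.2.2 e else 0) := by
            rw [← comb_sum]
            exact Finset.sum_congr rfl fun e _ => by
              by_cases h : w ∈ (e : Sym2 V) <;> simp [h] <;> ring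
          rw [hs]
          have h1 := p3 w hw
          have h2 := q3 w hw
          nlinarith
        · intro v hv
          have hs : (∑ e : G.edgeSet, if v ∈ (e : Sym2 V) then
                (a * p.2.1 e + b * q.2.1 e) - (a * p.2.2.2 e + b * q.2.2.2 e) else 0)
              = a * (∑ e : G.edgeSet, if v ∈ (e : Sym2 V) then p.2.1 e - p.2.2.2 e else 0)
                + b * (∑ e : G.edgeSet, if v ∈ (e : Sym2 V) then q.2.1 e - q.2.2.2 e else 0) := by
            rw [← comb_sum]
            exact Finset.sum_congr rfl fun e _ => by
              by_cases h : v ∈ (e : Sym2 V) <;> simp [h] <;> ring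
          rw [hs]
          have h1 := p4 v hv
          have h2 := q4 v hv
          nlinarith
        · intro e
          have := p5 e
          have := q5 e
          nlinarith
        · intro e
          have := p6 e
          have := q6 e
          nlinarith
        · intro v
          have := p7 v
          have := q7 v
          nlinarith
        · nlinarith
        · nlinarith
      · intro v
        simp only [Pi.add_apply, Pi.smul_apply, smul_eq_mul, Prod.fst_add, Prod.smul_fst,
          hpv v, hqv v]
      · intro e
        simp only [Pi.add_apply, Pi.smul_apply, smul_eq_mul, Prod.fst_add, Prod.snd_add,
          Prod.smul_fst, Prod.smul_snd, hpe e, hqe e]
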